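/- arXiv:2510.14480 — 4 statements merged into one kernel-verified Lean document; each statement's English description precedes it below -/
import Mathlib

section
/- In any token-preserving system, for any system state σ and list of moves tr, the adversary's gain is bounded above by the value of the honest tokens in σ: gainMoves σ tr ≤ tokenValue (honTokens σ.s). -/
open scoped NNReal

/-- A system state: the adversary's wallet together with an honest state. -/
structure SysState (Token State : Type) where
  Δ : Token → ℝ
  s : State

/-- A blockchain system model. -/
structure System where
  Token : Type
  State : Type
  Move : Type
  semantics : SysState Token State → Move → Option (SysState Token State)
  honTokens : State → Token → ℝ≥0
  preserveTokens : ∀ (σ : SysState Token State) (m : Move),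
    match semantics σ m with
    | .none => True
    | .some σ' => ∀ τ, (honTokens σ.s τ : ℝ) + σ.Δ τ = (honTokens σ'.s τ : ℝ) + σ'.Δ τ
  tokenValue : (Token → ℝ) → ℝ
  tokenValue_nonneg : ∀ f : Token → ℝ, (∀ τ, 0 ≤ f τ) → 0 ≤ tokenValue f
  tokenValue_additive : ∀ f g : Token → ℝ,
    tokenValue (f + g) = tokenValue f + tokenValue g

/-- Adversarial gain between two system states. -/
def gainState (sys : System) (σ σ' : SysState sys.Token sys.State) : ℝ :=
  sys.tokenValue σ'.Δ - sys.tokenValue σ.Δ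

/-- Composed effect of a list of moves (failing moves are skipped). -/
def semMoves (sys : System) (σ : SysState sys.Token sys.State) :
    List sys.Move → SysState sys.Token sys.State
  | [] => σ
  | m :: ms =>
    match sys.semantics σ m with
    | .none => semMoves sys σ ms
    | .some σ' => semMoves sys σ' ms

/-- Adversarial gain of a list of moves. -/
def gainMoves (sys : System) (σ : SysState sys.Token sys.State)
    (tr : List sys.Move) : ℝ :=
  gainState sys σ (semMoves sys σ tr)

/-- Maximal extractable value. -/
structure MEV (sys : System) (σ : SysState sys.Token sys.State) (v : ℝ) : Prop where
  trace_reaches_v : ∃ tr, gainMoves sys σ tr = v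
  other_traces_worse : ∀ tr, gainMoves sys σ tr ≤ v

/-- Least upper bound of the extractable values. -/
structure MEVsup (sys : System) (σ : SysState sys.Token sys.State) (v : ℝ) : Prop where
  traces_approx : ∀ ε : ℝ, 0 < ε → ∃ tr, v ≤ gainMoves sys σ tr + ε
  other_traces_worse : ∀ tr, gainMoves sys σ tr ≤ v

lemma semMoves_invariant (sys : System) (tr : List sys.Move)
    (σ : SysState sys.Token sys.State) :
    (fun τ => (sys.honTokens (semMoves sys σ tr).s τ : ℝ)) + (semMoves sys σ tr).Δ
      = (fun τ => (sys.honTokens σ.s τ : ℝ)) + σ.Δ := by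
  induction tr generalizing σ with
  | nil => rfl
  | cons m ms ih =>
    have h := sys.preserveTokens σ m
    simp only [semMoves]
    cases hm : sys.semantics σ m with
    | none => exact ih σ
    | some σ' =>
      rw [hm] at h
      rw [ih σ']
      funext τ
      exact (h τ).symm
  
theorem gainMoves_bound (sys : System) (σ : SysState sys.Token sys.State)
    (tr : List sys.Move) :
    gainMoves sys σ tr ≤ sys.tokenValue (fun τ => (sys.honTokens σ.s τ : ℝ)) := by
  have key := congrArg sys.tokenValue (semMoves_invariant sys tr σ)
  rw [sys.tokenValue_additive, sys.tokenValue_additive] at key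
  have hnn := sys.tokenValue_nonneg
    (fun τ => (sys.honTokens (semMoves sys σ tr).s τ : ℝ))
    (fun τ => (sys.honTokens (semMoves sys σ tr).s τ).coe_nonneg)
  unfold gainMoves gainState
  linarith
end

section
/- MEV characterization (soundness): Let σ be a system state, inv an invariant on system states holding at σ and preserved by the semantics, and guess a function assigning to every invariant-abiding state a non-negative real. Suppose (coherence) there exists a trace tr with gainMoves σ tr = guess σ, and (soundness) for every move from an invariant-abiding state σ₀ to σ₁, gainState σ₀ σ₁ + guess σ₁ ≤ guess σ₀. Then MEV σ (guess σ) holds. -/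
open scoped NNReal

theorem MEV.characterization (sys : System) (σ : SysState sys.Token sys.State)
    (inv : SysState sys.Token sys.State → Prop)
    (MEV_guess : (σ' : SysState sys.Token sys.State) → inv σ' → ℝ≥0)
    (invariant_init : inv σ)
    (invariant_sound : ∀ {m : sys.Move} {σ₀ σ₁ : SysState sys.Token sys.State},
      sys.semantics σ₀ m = some σ₁ → inv σ₀ → inv σ₁)
    (MEV_guess_coherent : ∃ tr : List sys.Move,
      gainMoves sys σ tr = MEV_guess σ invariant_init)
    (MEV_guess_sound : ∀ {m : sys.Move} {σ₀ σ₁ : SysState sys.Token sys.State},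
      (hmove : sys.semantics σ₀ m = some σ₁) → (σ₀_inv : inv σ₀) →
      gainState sys σ₀ σ₁ + (MEV_guess σ₁ (invariant_sound hmove σ₀_inv) : ℝ)
        ≤ (MEV_guess σ₀ σ₀_inv : ℝ)) :
    MEV sys σ (MEV_guess σ invariant_init) := by
  have key : ∀ (tr : List sys.Move) (σ' : SysState sys.Token sys.State) (h : inv σ'),
      gainMoves sys σ' tr ≤ (MEV_guess σ' h : ℝ) := by
    intro tr
    induction tr with
    | nil =>
      intro σ' h
      simp [gainMoves, semMoves, gainState]
    | cons m ms ih =>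
      intro σ' h
      unfold gainMoves semMoves
      cases hsem : sys.semantics σ' m with
      | none => exact ih σ' h
      | some σ'' =>
        have h2 : inv σ'' := invariant_sound hsem h
        have hih := ih σ'' h2
        have hs := MEV_guess_sound hsem h
        unfold gainMoves at hih
        unfold gainState at hih hs ⊢
        linarith
  exact ⟨MEV_guess_coherent, fun tr => key tr σ invariant_init⟩
end

section
/- MEV characterization (completeness): Let σ be a system state and inv an invariant holding at σ and preserved by the semantics. If for every invariant-abiding state σ' there exists v with MEV σ' v, then there exists a guess function from invariant-abiding states to non-negative reals that is coherent at σ (some trace from σ extracts exactly guess σ) and sound (for every move from an invariant-abiding σ₀ to σ₁, gainState σ₀ σ₁ + guess σ₁ ≤ guess σ₀). -/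
open scoped NNReal

theorem gainState_add_gainState (sys : System) (σ σ' σ'' : SysState sys.Token sys.State) :
    gainState sys σ σ' + gainState sys σ' σ'' = gainState sys σ σ'' := by
  simp only [gainState]
  ring

@[simp]
theorem gainMoves_nil (sys : System) (σ : SysState sys.Token sys.State) :
    gainMoves sys σ [] = 0 :=
  sub_self _

theorem gainMoves_cons_of_semantics_eq_some {sys : System} {σ σ' : SysState sys.Token sys.State}
    {m : sys.Move} (h : sys.semantics σ m = some σ') (tr : List sys.Move) :
    gainMoves sys σ (m :: tr) = gainState sys σ σ' + gainMoves sys σ' tr := by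
  simp only [gainMoves, semMoves, h, gainState_add_gainState]

namespace MEV

variable {sys : System}

theorem nonneg {σ : SysState sys.Token sys.State} {v : ℝ} (h : MEV sys σ v) : 0 ≤ v :=
  gainMoves_nil sys σ ▸ h.other_traces_worse []

/-- Bellman inequality: playing `m` first is one of the strategies available from `σ₀`. -/
theorem gainState_add_le {m : sys.Move} {σ₀ σ₁ : SysState sys.Token sys.State} {v₀ v₁ : ℝ}
    (hmove : sys.semantics σ₀ m = some σ₁) (h₀ : MEV sys σ₀ v₀) (h₁ : MEV sys σ₁ v₁) :
    gainState sys σ₀ σ₁ + v₁ ≤ v₀ := by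
  obtain ⟨tr, rfl⟩ := h₁.trace_reaches_v
  rw [← gainMoves_cons_of_semantics_eq_some hmove]
  exact h₀.other_traces_worse (m :: tr)

end MEV

theorem MEV.characterization_complete (sys : System)
    (σ : SysState sys.Token sys.State)
    (inv : SysState sys.Token sys.State → Prop)
    (invariant_init : inv σ)
    (invariant_sound : ∀ {m : sys.Move} {σ₀ σ₁ : SysState sys.Token sys.State},
      sys.semantics σ₀ m = some σ₁ → inv σ₀ → inv σ₁)
    (mev : ∀ σ', inv σ' → ∃ v, MEV sys σ' v) :
    ∃ guess : (σ' : SysState sys.Token sys.State) → inv σ' → ℝ≥0,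
      -- guess is coherent
      (∃ tr : List sys.Move,
        gainMoves sys σ tr = guess σ invariant_init) ∧
      -- guess is sound
      (∀ {m : sys.Move} {σ₀ σ₁ : SysState sys.Token sys.State},
        (hmove : sys.semantics σ₀ m = some σ₁) → (σ₀_inv : inv σ₀) →
        gainState sys σ₀ σ₁ + (guess σ₁ (invariant_sound hmove σ₀_inv) : ℝ)
          ≤ (guess σ₀ σ₀_inv : ℝ)) := by
  choose v hv using mev
  refine ⟨fun σ' h => ⟨v σ' h, (hv σ' h).nonneg⟩, (hv σ invariant_init).trace_reaches_v, ?_⟩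
  intro m σ₀ σ₁ hmove σ₀_inv
  exact (hv σ₀ σ₀_inv).gainState_add_le hmove (hv σ₁ _)
end

section
/- For a constant-product AMM with reserves r₀, r₁ > 0 and prices pr₀, pr₁ > 0, the single swap that maximizes the adversary's value-gain pr₁·(x·r₁/(r₀+x)) − pr₀·x over inputs x of token τ₀ (including possibly swapping in the other direction) yields exactly (√(pr₀·r₀) − √(pr₁·r₁))², achieved by moving the reserves to the balanced state where pr₀·r₀' = pr₁·r₁' with r₀'·r₁' = r₀·r₁; moreover after this balancing swap the extractable value of the resulting state is 0. -/
set_option maxHeartbeats 1000000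


/-- For a constant-product AMM with reserves `r₀, r₁ > 0` and prices
`pr₀, pr₁ > 0`, there is a balancing swap, moving the reserves to `(r₀', r₁')`
with `pr₀·r₀' = pr₁·r₁'` and `r₀'·r₁' = r₀·r₁`, whose value-gain is exactly
`(√(pr₀·r₀) − √(pr₁·r₁))²`; the extractable value of the resulting balanced
state is `0`; and no single swap, in either direction, yields a larger gain:
swapping `x > 0` units of τ₀ gains `pr₁·(x·r₁/(r₀+x)) − pr₀·x`, and
symmetrically for τ₁. -/
theorem optimal_single_swap (r₀ r₁ pr₀ pr₁ : ℝ)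
    (hr₀ : 0 < r₀) (hr₁ : 0 < r₁) (hpr₀ : 0 < pr₀) (hpr₁ : 0 < pr₁) :
    ∃ r₀' r₁' : ℝ, 0 < r₀' ∧ 0 < r₁' ∧
      -- the new state is balanced and on the same constant-product curve
      pr₀ * r₀' = pr₁ * r₁' ∧ r₀' * r₁' = r₀ * r₁ ∧
      -- the balancing swap gains exactly the extractable value
      pr₀ * (r₀ - r₀') + pr₁ * (r₁ - r₁')
        = (Real.sqrt (pr₀ * r₀) - Real.sqrt (pr₁ * r₁))^2 ∧
      -- after balancing, the extractable value is zero
      (Real.sqrt (pr₀ * r₀') - Real.sqrt (pr₁ * r₁'))^2 = 0 ∧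
      -- no swap sending x units of τ₀ gains more
      (∀ x : ℝ, 0 < x →
        pr₁ * (x * r₁ / (r₀ + x)) - pr₀ * x
          ≤ (Real.sqrt (pr₀ * r₀) - Real.sqrt (pr₁ * r₁))^2) ∧
      -- no swap sending x units of τ₁ gains more
      (∀ x : ℝ, 0 < x →
        pr₀ * (x * r₀ / (r₁ + x)) - pr₁ * x
          ≤ (Real.sqrt (pr₀ * r₀) - Real.sqrt (pr₁ * r₁))^2) := by
  set s0 := Real.sqrt (pr₀ * r₀) with hs0def
  set s1 := Real.sqrt (pr₁ * r₁) with hs1def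
  have hs0 : 0 < s0 := Real.sqrt_pos.mpr (by positivity)
  have hs1 : 0 < s1 := Real.sqrt_pos.mpr (by positivity)
  have hs0sq : s0 ^ 2 = pr₀ * r₀ := Real.sq_sqrt (by positivity)
  have hs1sq : s1 ^ 2 = pr₁ * r₁ := Real.sq_sqrt (by positivity)
  have ha : (0:ℝ) < Real.sqrt pr₀ := Real.sqrt_pos.mpr hpr₀
  have hb : (0:ℝ) < Real.sqrt pr₁ := Real.sqrt_pos.mpr hpr₁
  have hc : (0:ℝ) < Real.sqrt r₀ := Real.sqrt_pos.mpr hr₀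
  have hd : (0:ℝ) < Real.sqrt r₁ := Real.sqrt_pos.mpr hr₁
  have hasq : Real.sqrt pr₀ ^ 2 = pr₀ := Real.sq_sqrt hpr₀.le
  have hbsq : Real.sqrt pr₁ ^ 2 = pr₁ := Real.sq_sqrt hpr₁.le
  have hcsq : Real.sqrt r₀ ^ 2 = r₀ := Real.sq_sqrt hr₀.le
  have hdsq : Real.sqrt r₁ ^ 2 = r₁ := Real.sq_sqrt hr₁.le
  have hs0m : s0 = Real.sqrt pr₀ * Real.sqrt r₀ := Real.sqrt_mul hpr₀.le _
  have hs1m : s1 = Real.sqrt pr₁ * Real.sqrt r₁ := Real.sqrt_mul hpr₁.le _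
  refine ⟨s0 * s1 / pr₀, s0 * s1 / pr₁, by positivity, by positivity, ?_, ?_, ?_, ?_, ?_, ?_⟩
  · field_simp
  · field_simp
    nlinarith [hs0sq, hs1sq]
  · field_simp
    nlinarith [hs0sq, hs1sq]
  · have h1 : pr₀ * (s0 * s1 / pr₀) = s0 * s1 := by field_simp
    have h2 : pr₁ * (s0 * s1 / pr₁) = s0 * s1 := by field_simp
    rw [h1, h2, sub_self]
    ring
  · intro x hx
    have hpos : (0:ℝ) < r₀ + x := by linarith
    rw [mul_div_assoc' , sub_le_iff_le_add, div_le_iff₀ hpos]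
    have key : ((s0 - s1)^2 + pr₀ * x) * (r₀ + x) - pr₁ * (x * r₁)
        = (Real.sqrt pr₀ * x + Real.sqrt r₀ * (s0 - s1))^2 := by
      linear_combination (-x)*hs0sq + x*hs1sq - (s0-s1)^2*hcsq - x^2*hasq + 2*x*(s0-s1)*hs0m
    nlinarith [sq_nonneg (Real.sqrt pr₀ * x + Real.sqrt r₀ * (s0 - s1)), key]
  · intro x hx
    have hpos : (0:ℝ) < r₁ + x := by linarith
    rw [mul_div_assoc', sub_le_iff_le_add, div_le_iff₀ hpos]
    have key : ((s0 - s1)^2 + pr₁ * x) * (r₁ + x) - pr₀ * (x * r₀)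
        = (Real.sqrt pr₁ * x + Real.sqrt r₁ * (s1 - s0))^2 := by
      linear_combination (-x)*hs1sq + x*hs0sq - (s0-s1)^2*hdsq - x^2*hbsq + 2*x*(s1-s0)*hs1m
    nlinarith [sq_nonneg (Real.sqrt pr₁ * x + Real.sqrt r₁ * (s1 - s0)), key]
end
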